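/- Let D, t, u, v be positive integers such that D is not a perfect square and the continued fraction expansion of √D is [t; \overline{u, v, u, 2t}] (period length 4). Then there exists a positive integer y such that D = ((u(y(uv+2) − v²) − v)/2)² + y(uv+2) − v² − y, where in particular u(y(uv+2) − v²) − v is even. -/

import Mathlib

/-!
Write `x₀ = √D` and let `x₁, …, x₄` be its complete quotients. The Gauss-map steps
`(xₙ - aₙ) xₙ₊₁ = 1` with partial quotients `t, u, v, u, 2t`, closed up by the periodicity
`x₅ = x₁` and by `x₀² = D`, eliminate to the single integer relation
`u (uv + 2) (D - t²) = 2t (uv + 1) + v`.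
Reducing it modulo `u` gives `u ∣ 2t + v`, and `y := (2t + v)/u - (D - t²)` is the parameter:
then `2t = u (y (uv + 2) - v²) - v` and `D - t² = y (uv + 1) - v²`.
-/

/-- Iterated Gauss map: `gaussIter x n` is the `n`-th complete quotient of the
continued fraction expansion of `x`. -/
noncomputable def gaussIter (x : ℝ) : ℕ → ℝ
  | 0 => x
  | n + 1 => (gaussIter x n - ⌊gaussIter x n⌋)⁻¹

/-- `cfCoeff x n` is the `n`-th partial quotient of the continued fraction of `x`. -/
noncomputable def cfCoeff (x : ℝ) (n : ℕ) : ℤ := ⌊gaussIter x n⌋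

/-- `IsPeriodicCF x k a` says that the continued fraction expansion of `x` is
`[a 0; a 1, …, a k, a 1, …, a k, …]`, i.e. `x = [a 0; \overline{a 1, …, a k}]`,
where the partial quotients `a 1, …, a k` are positive and `a k = 2 * a 0`. -/
def IsPeriodicCF (x : ℝ) (k : ℕ) (a : ℕ → ℤ) : Prop :=
  0 < a 0 ∧ (∀ i : ℕ, 1 ≤ i → i ≤ k → 0 < a i) ∧ a k = 2 * a 0 ∧
    cfCoeff x 0 = a 0 ∧ ∀ n : ℕ, 1 ≤ n → cfCoeff x n = a ((n - 1) % k + 1)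

lemma gaussIter_irrational {x : ℝ} (hx : Irrational x) : ∀ n, Irrational (gaussIter x n)
  | 0 => hx
  | n + 1 => ((gaussIter_irrational hx n).sub_intCast _).inv

lemma gaussIter_add (x : ℝ) (m n : ℕ) :
    gaussIter x (m + n) = gaussIter (gaussIter x m) n := by
  induction n with
  | zero => rfl
  | succ n ih => rw [← Nat.add_assoc, gaussIter, gaussIter, ih]

lemma cfCoeff_gaussIter (x : ℝ) (m n : ℕ) : cfCoeff (gaussIter x m) n = cfCoeff x (m + n) := by
  rw [cfCoeff, cfCoeff, gaussIter_add]

lemma gaussIter_sub_cfCoeff_mul_succ {x : ℝ} (hx : Irrational x) (n : ℕ) :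
    (gaussIter x n - cfCoeff x n) * gaussIter x (n + 1) = 1 :=
  mul_inv_cancel₀ (sub_ne_zero.mpr ((gaussIter_irrational hx n).ne_int _))

lemma intFractPair_stream_eq {x : ℝ} (hx : Irrational x) :
    ∀ n, GenContFract.IntFractPair.stream x n =
      some ⟨⌊gaussIter x n⌋, Int.fract (gaussIter x n)⟩
  | 0 => rfl
  | n + 1 => by
      have hfract : Int.fract (gaussIter x n) ≠ 0 :=
        Int.fract_ne_zero_iff.mpr fun ⟨m, hm⟩ => (gaussIter_irrational hx n).ne_int m hm.symm
      rw [GenContFract.IntFractPair.stream_succ_of_some (intFractPair_stream_eq hx n) hfract]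
      rfl

lemma eq_of_cfCoeff_eq {x y : ℝ} (hx : Irrational x) (hy : Irrational y)
    (h : ∀ n, cfCoeff x n = cfCoeff y n) : x = y := by
  have hof : GenContFract.of x = GenContFract.of y := by
    ext1
    · rw [GenContFract.of_h_eq_floor, GenContFract.of_h_eq_floor]
      exact congrArg _ (h 0)
    · ext1 n
      rw [GenContFract.get?_of_eq_some_of_succ_get?_intFractPair_stream
          (intFractPair_stream_eq hx (n + 1)),
        GenContFract.get?_of_eq_some_of_succ_get?_intFractPair_stream
          (intFractPair_stream_eq hy (n + 1))]
      exact congrArg (fun b : ℤ => some (GenContFract.Pair.mk (1 : ℝ) b)) (h (n + 1))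
  have hx_lim := GenContFract.of_convergence x
  rw [hof] at hx_lim
  exact tendsto_nhds_unique hx_lim (GenContFract.of_convergence y)

lemma gaussIter_add_period {x : ℝ} (hx : Irrational x) {k : ℕ} {a : ℕ → ℤ}
    (ha : IsPeriodicCF x k a) {n : ℕ} (hn : 1 ≤ n) :
    gaussIter x (n + k) = gaussIter x n := by
  obtain ⟨-, -, -, -, ha⟩ := ha
  refine eq_of_cfCoeff_eq (gaussIter_irrational hx _) (gaussIter_irrational hx _) fun m => ?_
  rw [cfCoeff_gaussIter, cfCoeff_gaussIter, ha _ (by omega), ha _ (by omega),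
    show n + k + m - 1 = n + m - 1 + k by omega, Nat.add_mod_right]

lemma period_four_relation {R : Type*} [CommRing R] {D t u v x x₁ x₂ x₃ x₄ : R}
    (hx : x ^ 2 = D) (e₀ : (x - t) * x₁ = 1) (e₁ : (x₁ - u) * x₂ = 1)
    (e₂ : (x₂ - v) * x₃ = 1) (e₃ : (x₃ - u) * x₄ = 1) (e₄ : (x₄ - 2 * t) * x₁ = 1) :
    u * (u * v + 2) * (D - t ^ 2) = 2 * t * (u * v + 1) + v := by
  have h₃ : (x₁ - u) + (v * (x₁ - u) - 1) * x₃ = 0 := by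
    linear_combination x₃ * e₁ - (x₁ - u) * e₂
  have h₄ : ((x₁ - u) * (1 + u * v) - u) * x₄ + v * (x₁ - u) - 1 = 0 := by
    linear_combination x₄ * h₃ - (v * (x₁ - u) - 1) * e₃
  have h₁ : (2 * t * (1 + u * v) + v) * x₁ ^ 2 - 2 * t * u * (u * v + 2) * x₁
      - u * (u * v + 2) = 0 := by
    linear_combination x₁ * h₄ - ((1 + u * v) * x₁ - u * (u * v + 2)) * e₄
  linear_combination -(x - t) ^ 2 * h₁ - u * (u * v + 2) * hx
    + ((2 * t * (u * v + 1) + v) * ((x - t) * x₁ + 1) - 2 * t * u * (u * v + 2) * (x - t)) * e₀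

lemma exists_param_of_period_four_relation {D t u v : ℤ} (ht : 0 ≤ t) (hu : 0 < u) (hv : 0 < v)
    (h : u * (u * v + 2) * (D - t ^ 2) = 2 * t * (u * v + 1) + v) :
    ∃ y : ℤ, 0 < y ∧ 2 ∣ (u * (y * (u * v + 2) - v ^ 2) - v) ∧
      D = ((u * (y * (u * v + 2) - v ^ 2) - v) / 2) ^ 2 + y * (u * v + 2) - v ^ 2 - y := by
  obtain ⟨c, hc⟩ : u ∣ 2 * t + v :=
    ⟨(u * v + 2) * (D - t ^ 2) - 2 * t * v, by linear_combination -h⟩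
  set y := c - (D - t ^ 2)
  have huy : u * y = 2 * t + v - u * (D - t ^ 2) := by linear_combination -hc
  have htwo_t : u * (y * (u * v + 2) - v ^ 2) - v = 2 * t := by
    linear_combination (u * v + 2) * huy - h
  have hgap : y * (u * v + 1) - v ^ 2 = D - t ^ 2 := by
    refine mul_left_cancel₀ hu.ne' ?_
    linear_combination (u * v + 1) * huy - h
  have hgap_pos : 0 < D - t ^ 2 :=
    pos_of_mul_pos_right (h ▸ by positivity : 0 < u * (u * v + 2) * (D - t ^ 2)) (by positivity)
  refine ⟨y, pos_of_mul_pos_left (by linarith [pow_pos hv 2] : 0 < y * (u * v + 1)) (by positivity),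
    ⟨t, by rw [htwo_t]⟩, ?_⟩
  rw [htwo_t, Int.mul_ediv_cancel_left _ two_ne_zero]
  linear_combination -hgap

theorem sqrt_cf_period_four_param_general (D t u v : ℕ)
    (hu : 0 < u) (hv : 0 < v) (hsq : ¬ IsSquare D)
    (h : IsPeriodicCF (Real.sqrt D) 4
      (fun n => if n = 0 then (t : ℤ) else if n = 1 then u else if n = 2 then v
        else if n = 3 then u else 2 * t)) :
    ∃ y : ℤ, 0 < y ∧
      2 ∣ ((u : ℤ) * (y * (u * v + 2) - (v : ℤ) ^ 2) - v) ∧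
      (D : ℤ) = (((u : ℤ) * (y * (u * v + 2) - (v : ℤ) ^ 2) - v) / 2) ^ 2 +
        y * (u * v + 2) - (v : ℤ) ^ 2 - y := by
  have hx : Irrational √(D : ℝ) := irrational_sqrt_natCast_iff.mpr hsq
  have hper : gaussIter √(D : ℝ) (1 + 4) = gaussIter √(D : ℝ) 1 :=
    gaussIter_add_period hx h le_rfl
  have step := gaussIter_sub_cfCoeff_mul_succ hx
  obtain ⟨-, -, -, h₀, hn⟩ := h
  have key : (u : ℝ) * (u * v + 2) * (D - t ^ 2) = 2 * t * (u * v + 1) + v :=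
    period_four_relation (x₁ := gaussIter _ 1) (x₂ := gaussIter _ 2) (x₃ := gaussIter _ 3)
      (x₄ := gaussIter _ 4) (Real.sq_sqrt (Nat.cast_nonneg D))
      (by simpa [h₀] using step 0 : (gaussIter _ 0 - t) * _ = 1) (by simpa [hn] using step 1)
      (by simpa [hn] using step 2) (by simpa [hn] using step 3)
      (by simpa [hn, hper] using step 4)
  exact exists_param_of_period_four_relation (Int.natCast_nonneg t) (by exact_mod_cast hu)
    (by exact_mod_cast hv) (by exact_mod_cast key)

/-- If `√D = [t; \overline{u, v, u, 2t}]` (period length 4), then there is a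
positive integer `y` with `u(y(uv+2) − v²) − v` even and
`D = ((u(y(uv+2) − v²) − v)/2)² + y(uv+2) − v² − y`. -/
theorem sqrt_cf_period_four_param (D t u v : ℕ) (hD : 0 < D) (ht : 0 < t)
    (hu : 0 < u) (hv : 0 < v) (hsq : ¬ IsSquare D)
    (h : IsPeriodicCF (Real.sqrt D) 4
      (fun n => if n = 0 then (t : ℤ) else if n = 1 then u else if n = 2 then v
        else if n = 3 then u else 2 * t)) :
    ∃ y : ℤ, 0 < y ∧
      2 ∣ ((u : ℤ) * (y * (u * v + 2) - (v : ℤ) ^ 2) - v) ∧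
      (D : ℤ) = (((u : ℤ) * (y * (u * v + 2) - (v : ℤ) ^ 2) - v) / 2) ^ 2 +
        y * (u * v + 2) - (v : ℤ) ^ 2 - y :=
  sqrt_cf_period_four_param_general D t u v hu hv hsq h
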